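/- arXiv:1210.0772 — 3 statements merged into one kernel-verified Lean document; each statement's English description precedes it below -/
import Mathlib

section
/- Let C be a unary covering of a finite nonempty set U and define cl_C(X) = ⋂{S : SL(S) = S and X ⊆ S} for X ⊆ U. Then for every x ∈ U, cl_C({x}) = N(x), the neighborhood of x. -/
open Set

/-- A covering of a finite nonempty universe `α`: a family of nonempty subsets whose union is everything. -/
def IsCovering {α : Type*} (C : Set (Set α)) : Prop :=
  (∀ K ∈ C, K.Nonempty) ∧ ⋃₀ C = Set.univ

/-- The second type of covering lower approximation. -/
def SL {α : Type*} (C : Set (Set α)) (X : Set α) : Set α :=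
  ⋃₀ {K | K ∈ C ∧ K ⊆ X}

/-- The second type of covering upper approximation. -/
def SH {α : Type*} (C : Set (Set α)) (X : Set α) : Set α :=
  ⋃₀ {K | K ∈ C ∧ (K ∩ X).Nonempty}

/-- The minimal description of a point. -/
def Md {α : Type*} (C : Set (Set α)) (x : α) : Set (Set α) :=
  {K | K ∈ C ∧ x ∈ K ∧ ∀ S ∈ C, x ∈ S → S ⊆ K → S = K}

/-- A covering is unary if every point has exactly one element in its minimal description. -/
def Unary {α : Type*} (C : Set (Set α)) : Prop :=
  ∀ x : α, ∃! K, K ∈ Md C x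

/-- The neighborhood of a point. -/
def Nbhd {α : Type*} (C : Set (Set α)) (x : α) : Set α :=
  ⋂₀ {K | K ∈ C ∧ x ∈ K}

/-- The indiscernible neighborhood of a point. -/
def IndNbhd {α : Type*} (C : Set (Set α)) (x : α) : Set α :=
  ⋃₀ {K | K ∈ C ∧ x ∈ K}

/-- A member of the covering is reducible if it is a union of other members. -/
def Reducible {α : Type*} (C : Set (Set α)) (K : Set α) : Prop :=
  ∃ D ⊆ C \ {K}, K = ⋃₀ D

/-- The reduct of a covering: its irreducible members. -/
def reduct {α : Type*} (C : Set (Set α)) : Set (Set α) :=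
  {K | K ∈ C ∧ ¬ Reducible C K}

/-- The closure operator induced by the fixed point family of `SL`. -/
def clC {α : Type*} (C : Set (Set α)) (X : Set α) : Set α :=
  ⋂₀ {S | SL C S = S ∧ X ⊆ S}

/-! In a unary covering the unique minimal description `M` of `x` lies inside every member of the
covering containing `x`, so `N(x) = M`. Since `M ∈ C` is a fixed point of `SL` containing `x`, the
closure of `{x}` is contained in `M`; conversely a fixed point `S ∋ x` satisfies `x ∈ SL(S)`, so some
member `K ⊆ S` contains `x`, and `M ⊆ K ⊆ S`. -/

section

variable {α : Type*} {C : Set (Set α)} {x : α} {K M : Set α}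

lemma SL_subset (C : Set (Set α)) (X : Set α) : SL C X ⊆ X :=
  sUnion_subset fun _ hK => hK.2

lemma SL_eq_self_of_mem (hK : K ∈ C) : SL C K = K :=
  (SL_subset C K).antisymm (subset_sUnion_of_mem ⟨hK, subset_rfl⟩)

lemma exists_mem_md_subset [Finite α] (hK : K ∈ C) (hx : x ∈ K) : ∃ M ∈ Md C x, M ⊆ K := by
  obtain ⟨M, ⟨hMC, hxM, hMK⟩, hmin⟩ :=
    (toFinite {S | S ∈ C ∧ x ∈ S ∧ S ⊆ K}).exists_minimal ⟨K, hK, hx, subset_rfl⟩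
  exact ⟨M, ⟨hMC, hxM, fun S hS hxS hSM => hSM.antisymm (hmin ⟨hS, hxS, hSM.trans hMK⟩ hSM)⟩, hMK⟩

lemma Unary.md_subset [Finite α] (hU : Unary C) (hM : M ∈ Md C x) (hK : K ∈ C) (hx : x ∈ K) :
    M ⊆ K := by
  obtain ⟨M', hM', hM'K⟩ := exists_mem_md_subset hK hx
  rwa [(hU x).unique hM hM']

lemma nbhd_eq_of_forall_subset (hM : M ∈ C) (hxM : x ∈ M) (hmin : ∀ K ∈ C, x ∈ K → M ⊆ K) :
    Nbhd C x = M :=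
  Subset.antisymm (sInter_subset_of_mem ⟨hM, hxM⟩) (subset_sInter fun K hK => hmin K hK.1 hK.2)

lemma clC_singleton_eq_of_forall_subset (hM : M ∈ C) (hxM : x ∈ M)
    (hmin : ∀ K ∈ C, x ∈ K → M ⊆ K) : clC C {x} = M := by
  refine Subset.antisymm (sInter_subset_of_mem ⟨SL_eq_self_of_mem hM, singleton_subset_iff.2 hxM⟩)
    (subset_sInter fun S ⟨hS, hxS⟩ => ?_)
  have hx_SL : x ∈ SL C S := hS.symm ▸ singleton_subset_iff.1 hxS
  obtain ⟨K, ⟨hKC, hKS⟩, hxK⟩ := hx_SL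
  exact (hmin K hKC hxK).trans hKS

end

theorem stmt_2_general {α : Type*} [Fintype α] (C : Set (Set α))
    (hU : Unary C) (x : α) :
    clC C {x} = Nbhd C x := by
  obtain ⟨M, hM, -⟩ := hU x
  have hmin : ∀ K ∈ C, x ∈ K → M ⊆ K := fun K hK hx => hU.md_subset hM hK hx
  rw [nbhd_eq_of_forall_subset hM.1 hM.2.1 hmin, clC_singleton_eq_of_forall_subset hM.1 hM.2.1 hmin]

theorem stmt_2 {α : Type*} [Fintype α] [Nonempty α] (C : Set (Set α))
    (hC : IsCovering C) (hU : Unary C) (x : α) :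
    clC C {x} = Nbhd C x :=
  stmt_2_general C hU x
end

section
/- Let C be a covering of a finite nonempty set U. Then C is unary and the family {N(x) : x ∈ U} forms a partition of U (i.e., for all x, y ∈ U, either N(x) = N(y) or N(x) ∩ N(y) = ∅) if and only if reduct(C), the set of irreducible elements of C, is a partition of U (i.e., ⋃ reduct(C) = U and distinct members of reduct(C) are pairwise disjoint). -/
open Set

/-!
Everything rests on one observation: a member of `C` that is minimal among those containing `x`
(an element of `Md C x`) is irreducible, since any decomposition of it into other members of `C`
would use one containing `x`. On a finite universe every member of `C` containing `x` sits above
such a minimal one, so `C` is unary exactly when each `x` has a least member of `C` containing it,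
and that least member is then `N(x)` and lies in `reduct C`.

If `C` is unary and the neighborhoods are pairwise equal or disjoint, every irreducible `K` is
some `N(x)`, for otherwise `K` is the union of the neighborhoods of its points, all different from
`K`; so `reduct C` consists of pairwise disjoint neighborhoods covering everything. Conversely, if
`reduct C` is a partition, the block through `x` lies below every member of `C` containing `x`,
because such a member contains an irreducible set through `x`, which can only be that block.
-/

section Covering

variable {α : Type*} {C : Set (Set α)} {x : α} {K S : Set α}

lemma mem_Nbhd_self : x ∈ Nbhd C x := fun _ hK => hK.2

lemma Nbhd_subset (hK : K ∈ C) (hx : x ∈ K) : Nbhd C x ⊆ K :=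
  sInter_subset_of_mem ⟨hK, hx⟩

lemma Nbhd_eq_of_isLeast (h : IsLeast {S | S ∈ C ∧ x ∈ S} K) : Nbhd C x = K :=
  h.csInf_eq

lemma mem_Md_of_isLeast (h : IsLeast {S | S ∈ C ∧ x ∈ S} K) : K ∈ Md C x :=
  ⟨h.1.1, h.1.2, fun _ hS hxS hSK => hSK.antisymm (h.2 ⟨hS, hxS⟩)⟩

lemma Md_subset_reduct : Md C x ⊆ reduct C := by
  rintro K ⟨hK, hxK, hmin⟩
  refine ⟨hK, ?_⟩
  rintro ⟨D, hD, rfl⟩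
  obtain ⟨T, hTD, hxT⟩ := hxK
  exact (hD hTD).2 (hmin T (hD hTD).1 hxT (subset_sUnion_of_mem hTD))

lemma exists_mem_Md_subset [Finite α] (hS : S ∈ C) (hx : x ∈ S) : ∃ K ∈ Md C x, K ⊆ S := by
  obtain ⟨K, hKS, hKmin⟩ :=
    exists_minimal_le_of_wellFoundedLT (fun T => T ∈ C ∧ x ∈ T) S ⟨hS, hx⟩
  exact ⟨K, ⟨hKmin.1.1, hKmin.1.2, fun T hT hxT hTK => hTK.antisymm (hKmin.2 ⟨hT, hxT⟩ hTK)⟩,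
    hKS⟩

lemma unary_iff_forall_exists_isLeast [Finite α] :
    Unary C ↔ ∀ x, ∃ K, IsLeast {S | S ∈ C ∧ x ∈ S} K := by
  constructor
  · intro hU x
    obtain ⟨K, hK, huniq⟩ := hU x
    refine ⟨K, ⟨hK.1, hK.2.1⟩, fun S ⟨hS, hxS⟩ => ?_⟩
    obtain ⟨M, hM, hMS⟩ := exists_mem_Md_subset hS hxS
    exact huniq M hM ▸ hMS
  · intro h x
    obtain ⟨K, hK⟩ := h x
    exact ⟨K, mem_Md_of_isLeast hK,
      fun M hM => (hM.2.2 K hK.1.1 hK.1.2 (hK.2 ⟨hM.1, hM.2.1⟩)).symm⟩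

lemma exists_Nbhd_eq_of_mem_reduct (hN : ∀ x, Nbhd C x ∈ C) (hK : K ∈ reduct C) :
    ∃ x, Nbhd C x = K := by
  by_contra! hne
  refine hK.2 ⟨{S | ∃ x ∈ K, Nbhd C x = S}, ?_, ?_⟩
  · rintro _ ⟨x, -, rfl⟩
    exact ⟨hN x, hne x⟩
  · refine (sUnion_subset ?_).antisymm' fun x hx => ⟨Nbhd C x, ⟨x, hx, rfl⟩, mem_Nbhd_self⟩
    rintro _ ⟨x, hx, rfl⟩
    exact Nbhd_subset hK.1 hx

lemma isLeast_of_mem_reduct [Finite α]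
    (hdisj : ∀ K1 ∈ reduct C, ∀ K2 ∈ reduct C, K1 ≠ K2 → K1 ∩ K2 = ∅)
    (hK : K ∈ reduct C) (hx : x ∈ K) : IsLeast {S | S ∈ C ∧ x ∈ S} K := by
  refine ⟨⟨hK.1, hx⟩, fun S ⟨hS, hxS⟩ => ?_⟩
  obtain ⟨M, hM, hMS⟩ := exists_mem_Md_subset hS hxS
  obtain rfl : M = K := by
    by_contra hne
    exact (hdisj M (Md_subset_reduct hM) K hK hne).subset ⟨hM.2.1, hx⟩
  exact hMS

end Covering

theorem stmt_5_general {α : Type*} [Fintype α] (C : Set (Set α)) :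
    (Unary C ∧ ∀ x y : α, Nbhd C x = Nbhd C y ∨ Nbhd C x ∩ Nbhd C y = ∅) ↔
    (⋃₀ reduct C = Set.univ ∧
      ∀ K1 ∈ reduct C, ∀ K2 ∈ reduct C, K1 ≠ K2 → K1 ∩ K2 = ∅) := by
  rw [unary_iff_forall_exists_isLeast]
  constructor
  · rintro ⟨hleast, hN⟩
    have hNbhd_mem : ∀ x, Nbhd C x ∈ reduct C := fun x => by
      obtain ⟨K, hK⟩ := hleast x
      rw [Nbhd_eq_of_isLeast hK]
      exact Md_subset_reduct (mem_Md_of_isLeast hK)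
    refine ⟨eq_univ_of_forall fun x => ⟨_, hNbhd_mem x, mem_Nbhd_self⟩, ?_⟩
    intro K1 hK1 K2 hK2 hne
    obtain ⟨x, rfl⟩ := exists_Nbhd_eq_of_mem_reduct (fun x => (hNbhd_mem x).1) hK1
    obtain ⟨y, rfl⟩ := exists_Nbhd_eq_of_mem_reduct (fun x => (hNbhd_mem x).1) hK2
    exact (hN x y).resolve_left hne
  · rintro ⟨hcover, hdisj⟩
    have hleast : ∀ x, ∃ K ∈ reduct C, IsLeast {S | S ∈ C ∧ x ∈ S} K := fun x => by
      obtain ⟨K, hK, hxK⟩ : x ∈ ⋃₀ reduct C := hcover ▸ mem_univ x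
      exact ⟨K, hK, isLeast_of_mem_reduct hdisj hK hxK⟩
    refine ⟨fun x => (hleast x).imp fun _ h => h.2, fun x y => ?_⟩
    obtain ⟨Kx, hKx, hx⟩ := hleast x
    obtain ⟨Ky, hKy, hy⟩ := hleast y
    rw [Nbhd_eq_of_isLeast hx, Nbhd_eq_of_isLeast hy]
    exact (eq_or_ne Kx Ky).imp_right (hdisj Kx hKx Ky hKy)

theorem stmt_5 {α : Type*} [Fintype α] [Nonempty α] (C : Set (Set α))
    (hC : IsCovering C) :
    (Unary C ∧ ∀ x y : α, Nbhd C x = Nbhd C y ∨ Nbhd C x ∩ Nbhd C y = ∅) ↔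
    (⋃₀ reduct C = Set.univ ∧
      ∀ K1 ∈ reduct C, ∀ K2 ∈ reduct C, K1 ≠ K2 → K1 ∩ K2 = ∅) :=
  stmt_5_general C
end

section
/- Let C be a covering of a finite nonempty set U. Then SH satisfies all four matroid closure axioms — (CL1) X ⊆ SH(X); (CL2) X ⊆ Y implies SH(X) ⊆ SH(Y); (CL3) SH(SH(X)) = SH(X); (CL4) y ∈ SH(X ∪ {x}) \ SH(X) implies x ∈ SH(X ∪ {y}) — if and only if the family {SH({x}) : x ∈ U} forms a partition of U, i.e., for all x, y ∈ U, either SH({x}) = SH({y}) or SH({x}) ∩ SH({y}) = ∅. -/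
open Set

/-!
For any covering, `SH` is extensive, monotone and has the exchange property: if `y` enters
`SH (X ∪ {x})` but not `SH X`, a block through `y` contains `x`, and that block puts `x` into
`SH (X ∪ {y})`. Since `SH X = ⋃ x ∈ X, SH {x}` and `z ∈ SH {x} ↔ x ∈ SH {z}`, idempotence
and the partition property are both equivalent to: `z ∈ SH {x}` implies `SH {z} = SH {x}`.
-/

section SH

variable {α : Type*} {C : Set (Set α)} {X : Set α} {x y : α}

theorem mem_SH : y ∈ SH C X ↔ ∃ K ∈ C, y ∈ K ∧ (K ∩ X).Nonempty := by
  simp only [SH, mem_sUnion]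
  exact ⟨fun ⟨K, ⟨hK, hKX⟩, hyK⟩ => ⟨K, hK, hyK, hKX⟩, fun ⟨K, hK, hyK, hKX⟩ => ⟨K, ⟨hK, hKX⟩, hyK⟩⟩

theorem mem_SH_singleton : y ∈ SH C {x} ↔ ∃ K ∈ C, y ∈ K ∧ x ∈ K := by
  simp only [mem_SH, inter_singleton_nonempty]

theorem mem_SH_singleton_comm : y ∈ SH C {x} ↔ x ∈ SH C {y} := by
  simp only [mem_SH_singleton, and_comm]

theorem SH_eq_biUnion (C : Set (Set α)) (X : Set α) : SH C X = ⋃ x ∈ X, SH C {x} := by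
  ext y
  simp only [mem_SH, mem_iUnion₂, inter_singleton_nonempty, exists_prop]
  constructor
  · rintro ⟨K, hK, hyK, x, hxK, hxX⟩
    exact ⟨x, hxX, K, hK, hyK, hxK⟩
  · rintro ⟨x, hxX, K, hK, hyK, hxK⟩
    exact ⟨K, hK, hyK, x, hxK, hxX⟩

theorem SH_mono (C : Set (Set α)) {X Y : Set α} (h : X ⊆ Y) : SH C X ⊆ SH C Y :=
  sUnion_mono fun _ ⟨hK, hKX⟩ => ⟨hK, hKX.mono (inter_subset_inter_right _ h)⟩

theorem subset_SH (hC : ⋃₀ C = univ) (X : Set α) : X ⊆ SH C X := by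
  intro x hx
  obtain ⟨K, hK, hxK⟩ := mem_sUnion.mp (hC.symm ▸ mem_univ x : x ∈ ⋃₀ C)
  exact mem_SH.mpr ⟨K, hK, hxK, x, hxK, hx⟩

theorem SH_subset_SH_SH (C : Set (Set α)) (X : Set α) : SH C X ⊆ SH C (SH C X) := by
  intro y hy
  obtain ⟨K, hK, hyK, -⟩ := mem_SH.mp hy
  exact mem_SH.mpr ⟨K, hK, hyK, y, hyK, hy⟩

theorem mem_SH_union_singleton_of_mem_diff (h : y ∈ SH C (X ∪ {x}) \ SH C X) :
    x ∈ SH C (X ∪ {y}) := by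
  obtain ⟨K, hK, hyK, w, hwK, hwX | rfl⟩ := mem_SH.mp h.1
  · exact absurd (mem_SH.mpr ⟨K, hK, hyK, w, hwK, hwX⟩) h.2
  · exact mem_SH.mpr ⟨K, hK, hwK, y, hyK, Or.inr rfl⟩

theorem SH_idempotent_iff :
    (∀ X, SH C (SH C X) = SH C X) ↔ ∀ x z : α, z ∈ SH C {x} → SH C {z} = SH C {x} := by
  constructor
  · intro hidem x z hz
    have subset_of_mem : ∀ {a b : α}, b ∈ SH C {a} → SH C {b} ⊆ SH C {a} := fun hb =>
      (SH_mono C (singleton_subset_iff.mpr hb)).trans (hidem _).le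
    exact (subset_of_mem hz).antisymm (subset_of_mem (mem_SH_singleton_comm.mp hz))
  · refine fun h X => (Subset.antisymm ?_ (SH_subset_SH_SH C X))
    intro w hw
    obtain ⟨z, hz, hwz⟩ := mem_iUnion₂.mp ((SH_eq_biUnion C _).subset hw)
    obtain ⟨x, hx, hzx⟩ := mem_iUnion₂.mp ((SH_eq_biUnion C X).subset hz)
    exact (SH_eq_biUnion C X).superset (mem_iUnion₂.mpr ⟨x, hx, h x z hzx ▸ hwz⟩)

theorem SH_singleton_partition_iff (hC : ⋃₀ C = univ) :
    (∀ x y : α, SH C {x} = SH C {y} ∨ SH C {x} ∩ SH C {y} = ∅) ↔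
      ∀ x z : α, z ∈ SH C {x} → SH C {z} = SH C {x} := by
  constructor
  · intro hpart x z hz
    refine (hpart z x).resolve_right fun hdisj => ?_
    exact hdisj.subset ⟨subset_SH hC {z} rfl, hz⟩
  · intro h x y
    rcases eq_empty_or_nonempty (SH C {x} ∩ SH C {y}) with hdisj | ⟨z, hzx, hzy⟩
    · exact Or.inr hdisj
    · exact Or.inl ((h x z hzx).symm.trans (h y z hzy))

end SH

theorem stmt_9_general {α : Type*} (C : Set (Set α))
    (hC : IsCovering C) :
    ((∀ X : Set α, X ⊆ SH C X) ∧
     (∀ X Y : Set α, X ⊆ Y → SH C X ⊆ SH C Y) ∧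
     (∀ X : Set α, SH C (SH C X) = SH C X) ∧
     (∀ (X : Set α) (x y : α),
        y ∈ SH C (X ∪ {x}) \ SH C X → x ∈ SH C (X ∪ {y}))) ↔
    (∀ x y : α, SH C {x} = SH C {y} ∨ SH C {x} ∩ SH C {y} = ∅) := by
  rw [SH_singleton_partition_iff hC.2, ← SH_idempotent_iff]
  exact ⟨fun h => h.2.2.1, fun hidem => ⟨subset_SH hC.2, fun _ _ => SH_mono C, hidem,
    fun _ _ _ => mem_SH_union_singleton_of_mem_diff⟩⟩

theorem stmt_9 {α : Type*} [Fintype α] [Nonempty α] (C : Set (Set α))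
    (hC : IsCovering C) :
    ((∀ X : Set α, X ⊆ SH C X) ∧
     (∀ X Y : Set α, X ⊆ Y → SH C X ⊆ SH C Y) ∧
     (∀ X : Set α, SH C (SH C X) = SH C X) ∧
     (∀ (X : Set α) (x y : α),
        y ∈ SH C (X ∪ {x}) \ SH C X → x ∈ SH C (X ∪ {y}))) ↔
    (∀ x y : α, SH C {x} = SH C {y} ∨ SH C {x} ∩ SH C {y} = ∅) :=
  stmt_9_general C hC
end
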